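/- arXiv:2003.00634 — 7 statements merged into one kernel-verified Lean document; each statement's English description precedes it below -/
import Mathlib

section
/- For any real vector κ ∈ ℝ^n, indices p ≠ q, and 2 ≤ l ≤ n, the following identity and inequality hold: σ_{l-1}(κ|p)·σ_{l-1}(κ|q) − σ_l(κ)·σ_{l-2}(κ|pq) = σ_{l-1}(κ|pq)² − σ_l(κ|pq)·σ_{l-2}(κ|pq), and if all entries of κ are nonnegative this quantity is nonnegative. -/
/-!
Write `s` for the multiset of the entries of `κ` other than `κ p, κ q`. Peeling these two entries
off with `σ_{k+1}(x :: s) = σ_{k+1}(s) + x σ_k(s)` turns the left-hand side into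
`σ_{l-1}(s)² - σ_l(s) σ_{l-2}(s)` by a ring identity. For nonnegative entries the sequence
`k ↦ σ_k(s)` is log-concave: adding an entry `x ≥ 0` convolves it with `(1, x)`, and a nonnegative
log-concave sequence without internal zeros also satisfies `a_k a_{k+3} ≤ a_{k+1} a_{k+2}`, which is
exactly what keeps the convolution log-concave.
-/

open Finset

/-- The `k`-th elementary symmetric polynomial of `κ : Fin n → ℝ`. -/
noncomputable def esymm (n k : ℕ) (κ : Fin n → ℝ) : ℝ :=
  ∑ s ∈ Finset.univ.powersetCard k, ∏ i ∈ s, κ i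

/-- `σ_k(κ|p)`: elementary symmetric polynomial with the `p`-th entry deleted. -/
noncomputable def esymmDel (n k : ℕ) (κ : Fin n → ℝ) (p : Fin n) : ℝ :=
  ∑ s ∈ (Finset.univ.erase p).powersetCard k, ∏ i ∈ s, κ i

/-- `σ_k(κ|pq)`: elementary symmetric polynomial with the `p`-th and `q`-th entries deleted. -/
noncomputable def esymmDel2 (n k : ℕ) (κ : Fin n → ℝ) (p q : Fin n) : ℝ :=
  ∑ s ∈ ((Finset.univ.erase p).erase q).powersetCard k, ∏ i ∈ s, κ i

theorem Multiset.esymm_cons_succ {R : Type*} [CommSemiring R] (a : R) (s : Multiset R) (k : ℕ) :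
    (a ::ₘ s).esymm (k + 1) = s.esymm (k + 1) + a * s.esymm k := by
  simp only [Multiset.esymm, Multiset.powersetCard_cons, Multiset.map_add, Multiset.sum_add,
    Multiset.map_map, Function.comp_def, Multiset.prod_cons, Multiset.sum_map_mul_left]

theorem Multiset.esymm_zero_left_succ {R : Type*} [CommSemiring R] (k : ℕ) :
    (0 : Multiset R).esymm (k + 1) = 0 := by
  simp [Multiset.esymm, Multiset.powersetCard_zero_right]

theorem Multiset.esymm_zero_right {R : Type*} [CommSemiring R] (s : Multiset R) :
    s.esymm 0 = 1 := by
  simp [Multiset.esymm, Multiset.powersetCard_zero_left]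

theorem Finset.map_val_eq_cons_erase {ι R : Type*} [DecidableEq ι] (f : ι → R) {t : Finset ι}
    {a : ι} (h : a ∈ t) : t.val.map f = f a ::ₘ (t.erase a).val.map f := by
  rw [Finset.erase_val, ← Multiset.map_cons, Multiset.cons_erase h]

section LogConcave

variable {R : Type*} [CommRing R] [LinearOrder R] [IsStrictOrderedRing R]

/-- `succ_eq_zero` says the zeros form a final segment; without it log-concavity is not
preserved by `add_mul_shift`, e.g. for `1, 0, 0, 1`. -/
structure IsLogConcaveSeq (a : ℕ → R) : Prop where
  nonneg : ∀ k, 0 ≤ a k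
  succ_eq_zero : ∀ k, a k = 0 → a (k + 1) = 0
  mul_le_sq : ∀ k, a k * a (k + 2) ≤ a (k + 1) ^ 2

namespace IsLogConcaveSeq

variable {a : ℕ → R}

theorem mul_le_mul_succ (ha : IsLogConcaveSeq a) (k : ℕ) :
    a k * a (k + 3) ≤ a (k + 1) * a (k + 2) := by
  rcases (ha.nonneg (k + 3)).eq_or_lt with h3 | h3
  · rw [← h3, mul_zero]
    exact mul_nonneg (ha.nonneg _) (ha.nonneg _)
  have h2 : 0 < a (k + 2) := (ha.nonneg _).lt_of_ne fun h => h3.ne' (ha.succ_eq_zero _ h.symm)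
  have h1 : 0 < a (k + 1) := (ha.nonneg _).lt_of_ne fun h => h2.ne' (ha.succ_eq_zero _ h.symm)
  refine le_of_mul_le_mul_right ?_ (mul_pos h1 h2)
  calc a k * a (k + 3) * (a (k + 1) * a (k + 2))
      = (a k * a (k + 2)) * (a (k + 1) * a (k + 3)) := by ring
    _ ≤ a (k + 1) ^ 2 * a (k + 2) ^ 2 :=
        mul_le_mul (ha.mul_le_sq k) (ha.mul_le_sq (k + 1))
          (mul_nonneg (ha.nonneg _) (ha.nonneg _)) (sq_nonneg _)
    _ = a (k + 1) * a (k + 2) * (a (k + 1) * a (k + 2)) := by ring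

/-- `b` is the coefficient sequence of `(1 + x t) * ∑ a k t ^ k`. -/
theorem add_mul_shift (ha : IsLogConcaveSeq a) {x : R} (hx : 0 ≤ x) {b : ℕ → R}
    (hb0 : b 0 = a 0) (hb : ∀ k, b (k + 1) = a (k + 1) + x * a k) :
    IsLogConcaveSeq b where
  nonneg
    | 0 => hb0 ▸ ha.nonneg 0
    | k + 1 => hb k ▸ add_nonneg (ha.nonneg _) (mul_nonneg hx (ha.nonneg _))
  succ_eq_zero
    | 0, h => by rw [hb, ← hb0, h, ha.succ_eq_zero 0 (hb0 ▸ h), mul_zero, add_zero]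
    | k + 1, h => by
      have hk1 : a (k + 1) = 0 :=
        ((add_eq_zero_iff_of_nonneg (ha.nonneg _) (mul_nonneg hx (ha.nonneg k))).1 (hb k ▸ h)).1
      rw [hb, ha.succ_eq_zero _ hk1, hk1, mul_zero, add_zero]
  mul_le_sq
    | 0 => by
      rw [hb0, hb, hb]
      nlinarith [ha.mul_le_sq 0, mul_nonneg (mul_nonneg hx (ha.nonneg 0)) (ha.nonneg 1),
        sq_nonneg (x * a 0)]
    | k + 1 => by
      rw [hb, hb, hb]
      nlinarith [ha.mul_le_sq k, ha.mul_le_sq (k + 1), ha.mul_le_mul_succ k,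
        mul_nonneg hx (sub_nonneg.2 (ha.mul_le_mul_succ k)),
        mul_nonneg (mul_nonneg hx hx) (sub_nonneg.2 (ha.mul_le_sq k))]

end IsLogConcaveSeq

theorem Multiset.isLogConcaveSeq_esymm (s : Multiset R) (hs : ∀ x ∈ s, 0 ≤ x) :
    IsLogConcaveSeq s.esymm := by
  induction s using Multiset.induction_on with
  | empty =>
    refine ⟨fun k => ?_, fun k _ => Multiset.esymm_zero_left_succ k, fun k => ?_⟩
    · cases k <;> simp [Multiset.esymm_zero_right, Multiset.esymm_zero_left_succ]
    · simp [Multiset.esymm_zero_left_succ]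
  | cons x s ih =>
    obtain ⟨hx, hs⟩ := Multiset.forall_mem_cons.1 hs
    exact (ih hs).add_mul_shift hx (by simp only [Multiset.esymm_zero_right])
      (Multiset.esymm_cons_succ x s)

end LogConcave

theorem esymm_quadratic_identity_general (n l : ℕ) (hl : 2 ≤ l)
    (κ : Fin n → ℝ) (p q : Fin n) (hpq : p ≠ q) :
    (esymmDel n (l - 1) κ p * esymmDel n (l - 1) κ q
        - esymm n l κ * esymmDel2 n (l - 2) κ p q
      = esymmDel2 n (l - 1) κ p q ^ 2
        - esymmDel2 n l κ p q * esymmDel2 n (l - 2) κ p q) ∧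
    ((∀ i, 0 ≤ κ i) →
      0 ≤ esymmDel n (l - 1) κ p * esymmDel n (l - 1) κ q
          - esymm n l κ * esymmDel2 n (l - 2) κ p q) := by
  obtain ⟨m, rfl⟩ : ∃ m, l = m + 2 := ⟨l - 2, by omega⟩
  rw [show m + 2 - 1 = m + 1 by omega, Nat.add_sub_cancel]
  set s := ((univ.erase p).erase q).val.map κ
  have hq : (univ.erase p).val.map κ = κ q ::ₘ s :=
    map_val_eq_cons_erase κ (mem_erase.2 ⟨hpq.symm, mem_univ q⟩)
  have hp : (univ.erase q).val.map κ = κ p ::ₘ s := by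
    rw [map_val_eq_cons_erase κ (mem_erase.2 ⟨hpq, mem_univ p⟩), erase_right_comm]
  have huniv : univ.val.map κ = κ p ::ₘ κ q ::ₘ s := by
    rw [map_val_eq_cons_erase κ (mem_univ p), hq]
  have hdel2 : ∀ k, esymmDel2 n k κ p q = s.esymm k := fun k => (esymm_map_val κ _ k).symm
  have key : esymmDel n (m + 1) κ p * esymmDel n (m + 1) κ q
        - esymm n (m + 2) κ * esymmDel2 n m κ p q
      = s.esymm (m + 1) ^ 2 - s.esymm (m + 2) * s.esymm m := by
    simp only [esymm, esymmDel, esymmDel2, ← esymm_map_val, hq, hp, huniv,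
      Multiset.esymm_cons_succ]
    ring
  refine ⟨by rw [key, hdel2, hdel2, hdel2], fun hκ => key ▸ sub_nonneg.2 ?_⟩
  rw [mul_comm]
  exact (s.isLogConcaveSeq_esymm (by simp [s, hκ])).mul_le_sq m

/-- Identity and nonnegativity for the quadratic expression in deleted symmetric functions. -/
theorem esymm_quadratic_identity (n l : ℕ) (hl : 2 ≤ l) (hln : l ≤ n)
    (κ : Fin n → ℝ) (p q : Fin n) (hpq : p ≠ q) :
    (esymmDel n (l - 1) κ p * esymmDel n (l - 1) κ q
        - esymm n l κ * esymmDel2 n (l - 2) κ p q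
      = esymmDel2 n (l - 1) κ p q ^ 2
        - esymmDel2 n l κ p q * esymmDel2 n (l - 2) κ p q) ∧
    ((∀ i, 0 ≤ κ i) →
      0 ≤ esymmDel n (l - 1) κ p * esymmDel n (l - 1) κ q
          - esymm n l κ * esymmDel2 n (l - 2) κ p q) :=
  esymm_quadratic_identity_general n l hl κ p q hpq
end

section
/- Newton's inequality: for any vector of n nonnegative reals and 1 ≤ s ≤ n−1, the normalized elementary symmetric functions p_s = σ_s / C(n,s) satisfy p_s² ≥ p_{s-1} · p_{s+1}. -/
open Finset

/-!
Newton's inequalities hold for every real-rooted polynomial written in binomial form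
`∑ₖ C(N, k) aₖ Xᵏ`. Differentiation (by Rolle's theorem) and reversal preserve real-rootedness,
and both keep the binomial form: they shift, respectively reflect, the coefficient sequence. So
`k - 1` derivatives, a reversal and `N - k - 1` further derivatives turn the polynomial into the
real-rooted quadratic `aₖ₊₁ + 2 aₖ X + aₖ₋₁ X²`, and a real root forces its discriminant
`4 (aₖ² - aₖ₋₁ aₖ₊₁)` to be nonnegative. The theorem is the case `∏ᵢ (X + κᵢ)`, whose
coefficient of `Xᵏ` is `σₙ₋ₖ = C(n, k) pₙ₋ₖ`.
-/

open Polynomial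

namespace Polynomial

theorem Splits.derivative {p : ℝ[X]} (hp : p.Splits) : p.derivative.Splits := by
  rw [splits_iff_card_roots] at hp ⊢
  have h₁ := card_roots_le_derivative p
  have h₂ := natDegree_derivative_le p
  exact le_antisymm (card_roots' _) (by omega)

theorem Splits.reverse {K : Type*} [Field K] {p : K[X]} (hp : p.Splits) : p.reverse.Splits := by
  induction hp using Submonoid.closure_induction with
  | mem q hq =>
    refine Splits.of_natDegree_le_one (q.reverse_natDegree_le.trans ?_)
    rcases hq with ⟨a, rfl⟩ | ⟨a, rfl⟩
    · simp
    · exact (natDegree_X_add_C a).le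
  | one => rw [← C_1, reverse_C]; exact Splits.C 1
  | mul q r _ _ hq hr => rw [reverse_mul_of_domain]; exact hq.mul hr

theorem Splits.reflect {K : Type*} [Field K] {p : K[X]} (hp : p.Splits) {N : ℕ}
    (hN : p.natDegree ≤ N) : (p.reflect N).Splits := by
  have h := reflect_mul p 1 le_rfl (natDegree_one.trans_le (Nat.zero_le (N - p.natDegree)))
  rw [mul_one, Nat.add_sub_cancel' hN, reflect_one] at h
  rw [h]
  exact hp.reverse.mul (Splits.X_pow _)

end Polynomial

section binomPoly

variable {R : Type*} [CommSemiring R]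

noncomputable def binomPoly (N : ℕ) (a : ℕ → R) : R[X] :=
  ∑ k ∈ range (N + 1), C ((N.choose k : R) * a k) * X ^ k

theorem coeff_binomPoly (N : ℕ) (a : ℕ → R) (k : ℕ) :
    (binomPoly N a).coeff k = N.choose k * a k := by
  simp only [binomPoly, finsetSum_coeff, coeff_C_mul_X_pow, sum_ite_eq, mem_range]
  split_ifs with hk
  · rfl
  · rw [Nat.choose_eq_zero_of_lt (by omega), Nat.cast_zero, zero_mul]

theorem natDegree_binomPoly_le (N : ℕ) (a : ℕ → R) : (binomPoly N a).natDegree ≤ N :=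
  natDegree_le_iff_coeff_eq_zero.mpr fun k hk => by
    rw [coeff_binomPoly, Nat.choose_eq_zero_of_lt (by exact_mod_cast hk), Nat.cast_zero, zero_mul]

theorem derivative_binomPoly (N : ℕ) (a : ℕ → R) :
    derivative (binomPoly (N + 1) a) = C ((N : R) + 1) * binomPoly N (fun k => a (k + 1)) := by
  ext k
  rw [coeff_derivative, coeff_C_mul, coeff_binomPoly, coeff_binomPoly, mul_right_comm,
    ← mul_assoc]
  congr 1
  simpa using congrArg (Nat.cast : ℕ → R) (Nat.add_one_mul_choose_eq N k).symm

theorem reflect_binomPoly (N : ℕ) (a : ℕ → R) :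
    reflect N (binomPoly N a) = binomPoly N (fun k => a (N - k)) := by
  ext k
  rw [coeff_reflect, coeff_binomPoly, coeff_binomPoly]
  rcases le_or_gt k N with hk | hk
  · rw [revAt_le hk, Nat.choose_symm hk]
  · rw [revAt_eq_self_of_lt hk, Nat.choose_eq_zero_of_lt hk, Nat.cast_zero, zero_mul, zero_mul]

end binomPoly

namespace Polynomial.Splits

variable {a : ℕ → ℝ}

theorem of_binomPoly_succ {N : ℕ} (h : (binomPoly (N + 1) a).Splits) :
    (binomPoly N fun k => a (k + 1)).Splits := by
  have hd := h.derivative.C_mul ((N : ℝ) + 1)⁻¹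
  rwa [derivative_binomPoly, ← mul_assoc, ← C_mul, inv_mul_cancel₀ (Nat.cast_add_one_ne_zero N),
    C_1, one_mul] at hd

theorem of_binomPoly_add {N : ℕ} (m : ℕ) (h : (binomPoly (N + m) a).Splits) :
    (binomPoly N fun k => a (k + m)).Splits := by
  induction m generalizing a with
  | zero => simpa using h
  | succ m ih =>
    have := ih (a := fun k => a (k + 1)) (of_binomPoly_succ (by rwa [← add_assoc] at h))
    simpa only [add_assoc, Nat.add_comm 1 m] using this

theorem binomPoly_reflect {N : ℕ} (h : (binomPoly N a).Splits) :
    (binomPoly N fun k => a (N - k)).Splits := by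
  rw [← reflect_binomPoly]
  exact h.reflect (natDegree_binomPoly_le N a)

theorem mul_le_sq_of_binomPoly_two (h : (binomPoly 2 a).Splits) : a 0 * a 2 ≤ a 1 ^ 2 := by
  rcases eq_or_ne (a 2) 0 with h2 | h2
  · rw [h2, mul_zero]; exact sq_nonneg _
  have hdeg : (binomPoly 2 a).degree ≠ 0 := fun h0 => by
    have := coeff_eq_zero_of_degree_lt (n := 2) (by rw [h0]; norm_num)
    simp [coeff_binomPoly, h2] at this
  obtain ⟨x, hx⟩ := h.exists_eval_eq_zero hdeg
  have hx' : a 0 + 2 * a 1 * x + a 2 * x ^ 2 = 0 := by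
    simpa [binomPoly, sum_range_succ, Nat.choose] using hx
  have hdisc : a 1 ^ 2 - a 0 * a 2 = (a 2 * x + a 1) ^ 2 := by linear_combination (-a 2) * hx'
  linarith [sq_nonneg (a 2 * x + a 1)]

theorem newton_binomPoly {N k : ℕ} (h : (binomPoly N a).Splits) (hk : 1 ≤ k) (hkN : k + 1 ≤ N) :
    a (k - 1) * a (k + 1) ≤ a k ^ 2 := by
  obtain ⟨j, rfl⟩ : ∃ j, k = j + 1 := ⟨k - 1, by omega⟩
  obtain ⟨m, rfl⟩ : ∃ m, N = 2 + m + j := ⟨N - j - 2, by omega⟩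
  have hquad :=
    (of_binomPoly_add m (of_binomPoly_add j h).binomPoly_reflect).mul_le_sq_of_binomPoly_two
  rw [show 2 + m - (0 + m) + j = j + 1 + 1 by omega, show 2 + m - (1 + m) + j = j + 1 by omega,
    show 2 + m - (2 + m) + j = j + 1 - 1 by omega] at hquad
  linarith

end Polynomial.Splits

theorem prod_X_add_C_eq_binomPoly (n : ℕ) (κ : Fin n → ℝ) :
    ∏ i, (X + C (κ i)) = binomPoly n fun k => esymm n (n - k) κ / n.choose (n - k) := by
  ext k
  rw [coeff_binomPoly]
  rcases le_or_gt k n with hk | hk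
  · rw [prod_X_add_C_coeff _ _ (by simpa using hk), card_univ, Fintype.card_fin,
      Nat.choose_symm hk, mul_div_cancel₀ _ (by exact_mod_cast Nat.choose_ne_zero hk)]
    rfl
  · rw [Nat.choose_eq_zero_of_lt hk, Nat.cast_zero, zero_mul]
    refine coeff_eq_zero_of_natDegree_lt ((natDegree_prod_le _ _).trans_lt ?_)
    simpa [natDegree_X_add_C] using hk

theorem newton_inequality_general (n s : ℕ) (hs : 1 ≤ s) (hsn : s + 1 ≤ n)
    (κ : Fin n → ℝ) :
    (esymm n (s - 1) κ / (n.choose (s - 1))) * (esymm n (s + 1) κ / (n.choose (s + 1)))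
      ≤ (esymm n s κ / (n.choose s)) ^ 2 := by
  have hsplit := prod_X_add_C_eq_binomPoly n κ ▸ Splits.prod fun i _ => Splits.X_add_C (κ i)
  have h := hsplit.newton_binomPoly (k := n - s) (by omega) (by omega)
  rw [show n - (n - s - 1) = s + 1 by omega, show n - (n - s + 1) = s - 1 by omega,
    show n - (n - s) = s by omega] at h
  rwa [mul_comm]

/-- Newton's inequality for the normalized elementary symmetric functions. -/
theorem newton_inequality (n s : ℕ) (hs : 1 ≤ s) (hsn : s + 1 ≤ n)
    (κ : Fin n → ℝ) (h : ∀ i, 0 ≤ κ i) :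
    (esymm n (s - 1) κ / (n.choose (s - 1))) * (esymm n (s + 1) κ / (n.choose (s + 1)))
      ≤ (esymm n s κ / (n.choose s)) ^ 2 :=
  newton_inequality_general n s hs hsn κ
end

section
/- If κ = (κ_1, ..., κ_n) satisfies κ_1 ≥ κ_2 ≥ ... ≥ κ_n > 0 (so κ lies in the positive cone) and σ_k(κ) ≥ c > 0 with σ_k(κ) ≤ C_1 for bounds c, C_1 > 0, then κ_1 ≤ C · σ_{k-1}(κ|1) · κ_1², i.e. σ_{k-1}(κ|1) · κ_1 ≥ 1/C, for a constant C depending only on n, k, c, C_1. -/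
open Finset

/-! Every `k`-fold product is at most `κ_max · σ_{k-1}(κ|max)`, so `σ_k ≤ binom(n,k) κ_1 σ_{k-1}(κ|1)`
and the lower bound `c ≤ σ_k` gives `σ_{k-1}(κ|1) κ_1 ≥ c / binom(n,k)`. -/

section

variable {n : ℕ} {κ : Fin n → ℝ}

theorem prod_le_esymmDel (hκ : ∀ i, 0 ≤ κ i) {p : Fin n} {t : Finset (Fin n)}
    (ht : t ⊆ univ.erase p) :
    ∏ i ∈ t, κ i ≤ esymmDel n t.card κ p :=
  single_le_sum (f := fun u => ∏ i ∈ u, κ i) (fun _ _ => prod_nonneg fun i _ => hκ i)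
    (mem_powersetCard.mpr ⟨ht, rfl⟩)

theorem prod_le_mul_esymmDel (hκ : ∀ i, 0 ≤ κ i) {p : Fin n} (hp : ∀ i, κ i ≤ κ p)
    {s : Finset (Fin n)} (hs : s.Nonempty) :
    ∏ i ∈ s, κ i ≤ κ p * esymmDel n (s.card - 1) κ p := by
  obtain ⟨j, hj, hpj⟩ : ∃ j ∈ s, p ∉ s.erase j := by
    by_cases hps : p ∈ s
    · exact ⟨p, hps, notMem_erase p s⟩
    · obtain ⟨j, hj⟩ := hs
      exact ⟨j, hj, fun h => hps (mem_of_mem_erase h)⟩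
  have hsub : s.erase j ⊆ univ.erase p := fun i hi =>
    mem_erase.mpr ⟨fun h => hpj (h ▸ hi), mem_univ i⟩
  rw [← mul_prod_erase s κ hj, ← card_erase_of_mem hj]
  exact mul_le_mul (hp j) (prod_le_esymmDel hκ hsub) (prod_nonneg fun i _ => hκ i) (hκ p)

theorem esymm_le_choose_mul_esymmDel (hκ : ∀ i, 0 ≤ κ i) {p : Fin n} (hp : ∀ i, κ i ≤ κ p)
    {k : ℕ} (hk : 1 ≤ k) :
    esymm n k κ ≤ n.choose k * (κ p * esymmDel n (k - 1) κ p) := by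
  calc esymm n k κ ≤ ∑ _s ∈ univ.powersetCard k, κ p * esymmDel n (k - 1) κ p := by
        refine sum_le_sum fun s hs => ?_
        have hcard := (mem_powersetCard.mp hs).2
        rw [← hcard]
        exact prod_le_mul_esymmDel hκ hp (card_pos.mp (by omega))
    _ = n.choose k * (κ p * esymmDel n (k - 1) κ p) := by
        rw [sum_const, card_powersetCard, card_univ, Fintype.card_fin, nsmul_eq_mul]

end

/-- Key lower bound: σ_{k-1}(κ|1) · κ₁ ≥ 1/C (Lemma 3.1 of Chou–Wang). -/
theorem key_lower_bound (n k : ℕ) (hk : 1 ≤ k) (hkn : k ≤ n)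
    (c C₁ : ℝ) (hc : 0 < c) :
    ∃ C : ℝ, 0 < C ∧ ∀ κ : Fin n → ℝ, (∀ i, 0 < κ i) →
      (∀ i j : Fin n, i ≤ j → κ j ≤ κ i) →
      c ≤ esymm n k κ → esymm n k κ ≤ C₁ →
      1 / C ≤ esymmDel n (k - 1) κ ⟨0, by omega⟩ * κ ⟨0, by omega⟩ := by
  have hchoose : 0 < (n.choose k : ℝ) := by exact_mod_cast Nat.choose_pos hkn
  refine ⟨n.choose k / c, div_pos hchoose hc, fun κ hpos hmono hlow _ => ?_⟩
  have hmax : ∀ i, κ i ≤ κ ⟨0, by omega⟩ := fun i => hmono _ i (Nat.zero_le _)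
  have hbound := esymm_le_choose_mul_esymmDel (fun i => (hpos i).le) hmax hk
  rw [one_div_div, div_le_iff₀ hchoose]
  linarith
end

section
/- Let κ_1 ≥ κ_2 ≥ ... ≥ κ_n > 0 and suppose 0 < δ' < 1. If κ_{l+1} ≤ δ'·κ_1 for some 1 ≤ l ≤ k−1 (with 2 ≤ k ≤ n), then σ_k(κ)/κ_1 ≤ C·δ'·σ_{k-1}(κ|p) for every p > l, where C depends only on n and k. -/
/-!
From each `k`-subset `s` split off a factor `κ_j ≤ δ'κ₁`: take `j = p` if `p ∈ s`, and otherwise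
an index `j ≥ l` of `s`, which exists because `#s = k > l`. What remains is a `(k-1)`-subset
avoiding `p`, and `s ↦ (j, s \ {j})` is injective, so `σ_k(κ) ≤ n δ'κ₁ σ_{k-1}(κ|p)`.
-/

open Finset

theorem Finset.sum_comp_le_sum_of_injOn {α β M : Type*} [AddCommMonoid M] [PartialOrder M]
    [IsOrderedAddMonoid M] {s : Finset α} {t : Finset β} {e : α → β} {f : β → M}
    (he : Set.InjOn e s) (hmaps : Set.MapsTo e s t) (hf : ∀ y ∈ t, 0 ≤ f y) :
    ∑ x ∈ s, f (e x) ≤ ∑ y ∈ t, f y := by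
  classical
  rw [← sum_image he]
  exact sum_le_sum_of_subset_of_nonneg (image_subset_iff.mpr hmaps) fun y hy _ => hf y hy

theorem Fin.exists_mem_le_val_of_lt_card {n l : ℕ} {s : Finset (Fin n)} (h : l < #s) :
    ∃ j ∈ s, l ≤ j.val := by
  by_contra! hs
  have : #(s.image Fin.val) ≤ #(range l) :=
    card_le_card fun x hx => by
      obtain ⟨j, hj, rfl⟩ := mem_image.mp hx
      exact mem_range.mpr (hs j hj)
  rw [card_image_of_injective s Fin.val_injective, card_range] at this
  omega

section

variable {ι : Type*} [DecidableEq ι] {U : Finset ι} {k : ℕ} {κ : ι → ℝ} {p : ι} {c : ℝ}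

theorem prod_le_mul_prod_erase {s : Finset ι} {j : ι} (hj : j ∈ s) (hκ : ∀ i ∈ s, 0 ≤ κ i)
    (hjc : κ j ≤ c) : ∏ i ∈ s, κ i ≤ c * ∏ i ∈ s.erase j, κ i := by
  rw [← mul_prod_erase s κ hj]
  exact mul_le_mul_of_nonneg_right hjc (prod_nonneg fun i hi => hκ i (mem_of_mem_erase hi))

theorem exists_mem_le_and_notMem_erase (hp : κ p ≤ c) {s : Finset ι}
    (hs : ∃ j ∈ s, κ j ≤ c) : ∃ j ∈ s, κ j ≤ c ∧ p ∉ s.erase j := by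
  by_cases hps : p ∈ s
  · exact ⟨p, hps, hp, notMem_erase p s⟩
  · obtain ⟨j, hjs, hjc⟩ := hs
    exact ⟨j, hjs, hjc, fun h => hps (mem_of_mem_erase h)⟩

theorem sum_powersetCard_prod_le_card_mul_sum_powersetCard_erase (hκ : ∀ i ∈ U, 0 ≤ κ i)
    (hc : 0 ≤ c) (hp : κ p ≤ c) (hmeet : ∀ s ∈ U.powersetCard k, ∃ j ∈ s, κ j ≤ c) :
    ∑ s ∈ U.powersetCard k, ∏ i ∈ s, κ i ≤
      #U * c * ∑ t ∈ (U.erase p).powersetCard (k - 1), ∏ i ∈ t, κ i := by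
  have : Nonempty ι := ⟨p⟩
  choose! j hjs hjc hpj using fun s hs => exists_mem_le_and_notMem_erase hp (hmeet s hs)
  set A := U.powersetCard k
  set B := (U.erase p).powersetCard (k - 1)
  set e : Finset ι → ι × Finset ι := fun s => (j s, s.erase (j s))
  have he_inj : Set.InjOn e A := fun s hs s' hs' h => by
    simpa only [e, insert_erase (hjs s hs), insert_erase (hjs s' hs')] using
      congrArg (fun x : ι × Finset ι => insert x.1 x.2) h
  have he_maps : ∀ s ∈ A, e s ∈ U ×ˢ B := by
    intro s hs
    obtain ⟨hsU, hcard⟩ := mem_powersetCard.mp hs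
    refine mem_product.mpr ⟨hsU (hjs s hs), mem_powersetCard.mpr ⟨?_, ?_⟩⟩
    · exact fun i hi => mem_erase.mpr ⟨fun h => hpj s hs (h ▸ hi), hsU (mem_of_mem_erase hi)⟩
    · rw [card_erase_of_mem (hjs s hs), hcard]
  calc ∑ s ∈ A, ∏ i ∈ s, κ i
      ≤ ∑ s ∈ A, c * ∏ i ∈ (e s).2, κ i := sum_le_sum fun s hs =>
        prod_le_mul_prod_erase (hjs s hs) (fun i hi => hκ i ((mem_powersetCard.mp hs).1 hi))
          (hjc s hs)
    _ ≤ ∑ x ∈ U ×ˢ B, c * ∏ i ∈ x.2, κ i := by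
        refine sum_comp_le_sum_of_injOn (f := fun x => c * ∏ i ∈ x.2, κ i) he_inj (fun s hs => he_maps s hs) fun x hx => mul_nonneg hc ?_
        obtain ⟨hxU, -⟩ := mem_powersetCard.mp (mem_product.mp hx).2
        exact prod_nonneg fun i hi => hκ i (mem_of_mem_erase (hxU hi))
    _ = #U * c * ∑ t ∈ B, ∏ i ∈ t, κ i := by
        simp only [sum_product, ← mul_sum, sum_const, nsmul_eq_mul]
        ring

end

/-- If κ_{l+1} ≤ δ'·κ₁ then σ_k(κ)/κ₁ ≤ C·δ'·σ_{k-1}(κ|p) for all p > l. -/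
theorem sigma_ratio_bound (n k : ℕ) (hk2 : 2 ≤ k) (hkn : k ≤ n) :
    ∃ C : ℝ, 0 < C ∧ ∀ κ : Fin n → ℝ, (∀ i, 0 < κ i) →
      (∀ i j : Fin n, i ≤ j → κ j ≤ κ i) →
      ∀ l : ℕ, 1 ≤ l → l ≤ k - 1 →
      ∀ δ' : ℝ, 0 < δ' → δ' < 1 →
      ∀ hln : l < n, κ ⟨l, hln⟩ ≤ δ' * κ ⟨0, by omega⟩ →
      ∀ p : Fin n, l ≤ p.val →
      esymm n k κ / κ ⟨0, by omega⟩ ≤ C * δ' * esymmDel n (k - 1) κ p := by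
  refine ⟨n, by exact_mod_cast (by omega : 0 < n), ?_⟩
  intro κ hpos hanti l hl1 hlk δ' hδ' _ hln hκl p hlp
  have htail : ∀ j : Fin n, l ≤ j.val → κ j ≤ δ' * κ ⟨0, by omega⟩ := fun j hj =>
    (hanti ⟨l, hln⟩ j hj).trans hκl
  have hmeet : ∀ s ∈ (univ : Finset (Fin n)).powersetCard k,
      ∃ j ∈ s, κ j ≤ δ' * κ ⟨0, by omega⟩ := fun s hs => by
    obtain ⟨j, hjs, hj⟩ := Fin.exists_mem_le_val_of_lt_card (l := l) (s := s)
      (by rw [(mem_powersetCard.mp hs).2]; omega)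
    exact ⟨j, hjs, htail j hj⟩
  have key := sum_powersetCard_prod_le_card_mul_sum_powersetCard_erase
    (fun i _ => (hpos i).le) (mul_pos hδ' (hpos _)).le (htail p hlp) hmeet
  rw [card_univ, Fintype.card_fin] at key
  rw [div_le_iff₀ (hpos _)]
  unfold esymm esymmDel
  linarith
end

section
/- Let κ_1 ≥ κ_2 ≥ ... ≥ κ_n > 0, let 1 ≤ l ≤ k−1 ≤ n−1, and let 0 < δ < 1/2 with κ_l ≥ δ·κ_1. Then for every p > l, σ_{l-1}(κ|p)/σ_l(κ) ≤ C/(δ·κ_1) for a constant C depending only on n and l. -/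
/-!
Both quantities are compared with the product `κ₁ ⋯ κ_{l-1}` of the `l - 1` largest entries.
Since `κ` is decreasing, every monomial of `σ_{l-1}(κ|p)` is at most that product, so
`σ_{l-1}(κ|p) ≤ 2ⁿ κ₁ ⋯ κ_{l-1}`; and the single monomial `κ₁ ⋯ κ_l` of `σ_l(κ)` is at least
`κ₁ ⋯ κ_{l-1} · δ κ₁`.
-/

open Finset

lemma Fin.val_le_of_strictMono {m n : ℕ} {f : Fin m → Fin n} (hf : StrictMono f) (j : Fin m) :
    (j : ℕ) ≤ f j := by
  simpa using card_le_card_of_injOn f (s := Iio j) (t := Iio (f j))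
    (fun i hi => by simpa using hf (by simpa using hi)) hf.injective.injOn

section Antitone

variable {n : ℕ} {κ : Fin n → ℝ}

lemma prod_le_prod_castLE (hκ0 : ∀ i, 0 ≤ κ i) (hκ : Antitone κ) {m : ℕ} (hmn : m ≤ n)
    {s : Finset (Fin n)} (hs : #s = m) :
    ∏ i ∈ s, κ i ≤ ∏ j : Fin m, κ (Fin.castLE hmn j) := by
  rw [← map_orderEmbOfFin_univ s hs, prod_map]
  refine prod_le_prod (fun j _ => hκ0 _) fun j _ => hκ ?_
  exact Fin.le_def.mpr (Fin.val_le_of_strictMono (s.orderEmbOfFin hs).strictMono j)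

lemma esymmDel_le_two_pow_mul (hκ0 : ∀ i, 0 ≤ κ i) (hκ : Antitone κ) {m : ℕ} (hmn : m ≤ n)
    (p : Fin n) :
    esymmDel n m κ p ≤ 2 ^ n * ∏ j : Fin m, κ (Fin.castLE hmn j) := by
  have hcard : #((univ.erase p).powersetCard m) ≤ 2 ^ n := by
    calc #((univ.erase p).powersetCard m) ≤ #(univ : Finset (Fin n)).powerset :=
          card_le_card fun s _ => mem_powerset.mpr (subset_univ s)
      _ = 2 ^ n := by simp
  calc esymmDel n m κ p
      ≤ #((univ.erase p).powersetCard m) • ∏ j : Fin m, κ (Fin.castLE hmn j) :=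
        sum_le_card_nsmul _ _ _ fun s hs =>
          prod_le_prod_castLE hκ0 hκ hmn (mem_powersetCard.mp hs).2
    _ ≤ 2 ^ n * ∏ j : Fin m, κ (Fin.castLE hmn j) := by
        rw [nsmul_eq_mul]
        gcongr
        · exact prod_nonneg fun j _ => hκ0 _
        · exact_mod_cast hcard

end Antitone

lemma prod_castLE_le_esymm {n m : ℕ} {κ : Fin n → ℝ} (hκ0 : ∀ i, 0 ≤ κ i) (hmn : m ≤ n) :
    ∏ j : Fin m, κ (Fin.castLE hmn j) ≤ esymm n m κ := by
  have hmem : univ.map (Fin.castLEEmb hmn) ∈ (univ : Finset (Fin n)).powersetCard m := by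
    simp
  simpa [esymm] using single_le_sum (f := fun s => ∏ i ∈ s, κ i)
    (fun s _ => prod_nonneg fun i _ => hκ0 i) hmem

/-- If κ_l ≥ δ·κ₁ then σ_{l-1}(κ|p)/σ_l(κ) ≤ C/(δ·κ₁) for p > l. -/
theorem sigma_l_ratio_bound (n l : ℕ) (hl : 1 ≤ l) :
    ∃ C : ℝ, 0 < C ∧ ∀ (k : ℕ) (hlk : l ≤ k - 1) (hkn : k ≤ n),
      ∀ κ : Fin n → ℝ, (∀ i, 0 < κ i) →
      (∀ i j : Fin n, i ≤ j → κ j ≤ κ i) →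
      ∀ δ : ℝ, 0 < δ → δ < 1 / 2 →
      δ * κ ⟨0, by omega⟩ ≤ κ ⟨l - 1, by omega⟩ →
      ∀ p : Fin n, l ≤ p.val →
      esymmDel n (l - 1) κ p / esymm n l κ ≤ C / (δ * κ ⟨0, by omega⟩) := by
  refine ⟨2 ^ n, by positivity, fun k hlk hkn κ hpos hκ δ hδ _ hδκ p _ => ?_⟩
  have hκ0 : ∀ i, 0 ≤ κ i := fun i => (hpos i).le
  obtain ⟨m, rfl⟩ : ∃ m, l = m + 1 := ⟨l - 1, by omega⟩
  have hmn : m ≤ n := by omega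
  set P := ∏ j : Fin m, κ (Fin.castLE hmn j)
  have hP : 0 < P := prod_pos fun j _ => hpos _
  have hupper := esymmDel_le_two_pow_mul hκ0 hκ hmn p
  have hlower : δ * κ ⟨0, by omega⟩ * P ≤ esymm n (m + 1) κ := by
    calc δ * κ ⟨0, by omega⟩ * P ≤ P * κ ⟨m, by omega⟩ := by
          rw [mul_comm P]; gcongr; exact hδκ
      _ = ∏ j : Fin (m + 1), κ (Fin.castLE (by omega) j) := by
          rw [Fin.prod_univ_castSucc]; rfl
      _ ≤ esymm n (m + 1) κ := prod_castLE_le_esymm hκ0 (by omega)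
  calc esymmDel n (m + 1 - 1) κ p / esymm n (m + 1) κ
      ≤ 2 ^ n * P / (δ * κ ⟨0, by omega⟩ * P) :=
        div_le_div₀ (by positivity) hupper (mul_pos (mul_pos hδ (hpos _)) hP) hlower
    _ = 2 ^ n / (δ * κ ⟨0, by omega⟩) := mul_div_mul_right _ _ hP.ne'
end

section
/- The function (σ_k/σ_l)^{1/(k−l)} is concave on the Gårding cone Γ_k = {κ ∈ ℝ^n : σ_j(κ) > 0 for j = 1, ..., k}, for 0 ≤ l < k ≤ n. -/
/-!
Write `Q_r = σ_{r+1} / σ_r`. On `Γ_k` the quotient `σ_k / σ_l` telescopes to `∏_{l ≤ j < k} Q_j`,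
so `(σ_k / σ_l)^{1/(k-l)}` is the geometric mean of `Q_l, …, Q_{k-1}`. Each `Q_j` is positively
homogeneous of degree one and superadditive on `Γ_{j+1}`, AM–GM shows that a geometric mean of
positive superadditive functions is superadditive, and a superadditive, positively 1-homogeneous
function on a convex cone is concave.

Superadditivity of `Q_r` on `Γ_{r+1}` and closedness of `Γ_r` under addition are proved together
by induction on `r`, through the identity
`(r + 2) Q_{r+1}(u) = σ_1(u) - ∑ᵢ uᵢ² / (uᵢ + Q_r(u|i))`:
by induction `uᵢ + Q_r(u|i)` is superadditive, and `(a, t) ↦ a² / t` is subadditive for `t > 0`.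
This needs `u|i ∈ Γ_r` for `u ∈ Γ_{r+1}`, which follows from Newton's inequality
`σ_{j+2} σ_j ≤ σ_{j+1}²` by induction on the number of variables, after deleting a nonpositive
entry of `u` when there is one.
-/

open Finset

def SuperadditiveOn {E β : Type*} [Add E] [Add β] [LE β] (s : Set E) (f : E → β) : Prop :=
  ∀ x ∈ s, ∀ y ∈ s, f x + f y ≤ f (x + y)

theorem ConvexCone.concaveOn_of_superadditiveOn {𝕜 E β : Type*}
    [Semiring 𝕜] [PartialOrder 𝕜] [AddCommMonoid E] [Module 𝕜 E]
    [AddCommMonoid β] [PartialOrder β] [Module 𝕜 β]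
    (S : ConvexCone 𝕜 E) {f : E → β} (hf : SuperadditiveOn S f)
    (hsmul : ∀ c : 𝕜, 0 < c → ∀ x ∈ S, f (c • x) = c • f x) : ConcaveOn 𝕜 S f := by
  refine ⟨S.convex, fun x hx y hy a b ha hb hab => ?_⟩
  rcases ha.eq_or_lt with rfl | ha
  · rw [zero_add] at hab
    simp [hab]
  rcases hb.eq_or_lt with rfl | hb
  · rw [add_zero] at hab
    simp [hab]
  rw [← hsmul a ha x hx, ← hsmul b hb y hy]
  exact hf _ (S.smul_mem ha hx) _ (S.smul_mem hb hy)

theorem Finset.prod_Ico_div₀ {G₀ : Type*} [CommGroupWithZero G₀] {f : ℕ → G₀} {m n : ℕ}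
    (hmn : m ≤ n) (hf : ∀ j ∈ Icc m n, f j ≠ 0) :
    ∏ j ∈ Ico m n, f (j + 1) / f j = f n / f m := by
  induction n, hmn using Nat.le_induction with
  | base => simp [div_self (hf m (by simp))]
  | succ n hmn ih =>
    rw [prod_Ico_succ_top hmn, ih fun j hj => hf j (by simp at hj ⊢; omega),
      mul_comm, div_mul_div_cancel₀ (hf n (by simp; omega))]

theorem Real.geom_mean_add_le {ι : Type*} {s : Finset ι} (hs : s.Nonempty) {a b : ι → ℝ}
    (ha : ∀ i ∈ s, 0 < a i) (hb : ∀ i ∈ s, 0 < b i) :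
    (∏ i ∈ s, a i) ^ (1 / (#s : ℝ)) + (∏ i ∈ s, b i) ^ (1 / (#s : ℝ))
      ≤ (∏ i ∈ s, (a i + b i)) ^ (1 / (#s : ℝ)) := by
  have hcard : (0 : ℝ) < #s := by exact_mod_cast hs.card_pos
  have hab : ∀ i ∈ s, 0 < a i + b i := fun i hi => add_pos (ha i hi) (hb i hi)
  have amgm : ∀ z : ι → ℝ, (∀ i ∈ s, 0 < z i) →
      (∏ i ∈ s, z i / (a i + b i)) ^ (1 / (#s : ℝ)) ≤ (∑ i ∈ s, z i / (a i + b i)) / #s :=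
    fun z hz => by
      simpa [one_div] using Real.geom_mean_le_arith_mean s (fun _ => 1)
        (fun i => z i / (a i + b i)) (fun _ _ => zero_le_one) (by simpa using hcard)
        fun i hi => (div_pos (hz i hi) (hab i hi)).le
  have hsum : ∑ i ∈ s, a i / (a i + b i) + ∑ i ∈ s, b i / (a i + b i) = #s := by
    rw [← sum_add_distrib,
      sum_congr rfl fun i hi => by rw [← add_div, div_self (hab i hi).ne'], sum_const, nsmul_one]
  have hA := amgm a ha
  have hB := amgm b hb
  rw [prod_div_distrib, Real.div_rpow (prod_nonneg fun i hi => (ha i hi).le)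
    (prod_nonneg fun i hi => (hab i hi).le)] at hA
  rw [prod_div_distrib, Real.div_rpow (prod_nonneg fun i hi => (hb i hi).le)
    (prod_nonneg fun i hi => (hab i hi).le)] at hB
  have h := add_le_add hA hB
  rwa [← add_div, ← add_div, hsum, div_self hcard.ne',
    div_le_one (Real.rpow_pos_of_pos (prod_pos hab) _)] at h

theorem le_of_natCast_add_two_mul_le {R : Type*} [CommRing R] [LinearOrder R]
    [IsStrictOrderedRing R] {x y : R} (n : ℕ) (hy : 0 ≤ y) (h : (n + 2) * x ≤ (n + 1) * y) :
    x ≤ y := by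
  by_contra! hxy
  nlinarith [mul_le_mul_of_nonneg_left hxy.le (by positivity : (0 : R) ≤ n + 1)]

theorem add_sq_div_le_of_add_le {K : Type*} [Field K] [LinearOrder K] [IsStrictOrderedRing K]
    {u v a b c : K} (ha : 0 < a) (hb : 0 < b) (habc : a + b ≤ c) :
    (u + v) ^ 2 / c ≤ u ^ 2 / a + v ^ 2 / b := by
  calc (u + v) ^ 2 / c ≤ (u + v) ^ 2 / (a + b) := by gcongr
    _ ≤ u ^ 2 / a + v ^ 2 / b := by
      rw [div_add_div _ _ ha.ne' hb.ne', div_le_div_iff₀ (by positivity) (by positivity)]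
      nlinarith [sq_nonneg (u * b - v * a), mul_pos ha hb]

variable {ι R : Type*}

def esymmOn [CommSemiring R] (A : Finset ι) (k : ℕ) (w : ι → R) : R :=
  ∑ s ∈ A.powersetCard k, ∏ i ∈ s, w i

section Semiring

variable [CommSemiring R] {A : Finset ι} {k : ℕ} {w : ι → R}

@[simp]
theorem esymmOn_zero (A : Finset ι) (w : ι → R) : esymmOn A 0 w = 1 := by
  simp [esymmOn]

theorem esymmOn_eq_zero_of_card_lt (h : A.card < k) (w : ι → R) : esymmOn A k w = 0 := by
  simp [esymmOn, powersetCard_eq_empty.2 h]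

theorem esymmOn_smul (A : Finset ι) (k : ℕ) (c : R) (w : ι → R) :
    esymmOn A k (c • w) = c ^ k * esymmOn A k w := by
  rw [esymmOn, esymmOn, mul_sum]
  refine sum_congr rfl fun s hs => ?_
  simp only [Pi.smul_apply, smul_eq_mul, prod_mul_distrib, prod_const, (mem_powersetCard.1 hs).2]

theorem esymmOn_one (A : Finset ι) (w : ι → R) : esymmOn A 1 w = ∑ i ∈ A, w i := by
  simp [esymmOn, powersetCard_one]

variable [DecidableEq ι]

theorem esymmOn_insert {a : ι} (ha : a ∉ A) (k : ℕ) (w : ι → R) :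
    esymmOn (insert a A) (k + 1) w = esymmOn A (k + 1) w + w a * esymmOn A k w := by
  simp only [esymmOn, ← esymm_map_val, insert_val_of_notMem ha, Multiset.map_cons,
    Multiset.esymm, Multiset.powersetCard_cons, Multiset.map_add, Multiset.sum_add,
    Multiset.map_map, Function.comp_def, Multiset.prod_cons, Multiset.sum_map_mul_left]

theorem esymmOn_erase {i : ι} (hi : i ∈ A) (k : ℕ) (w : ι → R) :
    esymmOn A (k + 1) w = esymmOn (A.erase i) (k + 1) w + w i * esymmOn (A.erase i) k w := by
  conv_lhs => rw [← insert_erase hi]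
  exact esymmOn_insert (notMem_erase i A) k w

theorem sum_esymmOn_erase (A : Finset ι) (k : ℕ) (w : ι → R) :
    ∑ i ∈ A, esymmOn (A.erase i) k w = ((A.card - k : ℕ) : R) * esymmOn A k w := by
  simp only [esymmOn, mul_sum]
  rw [sum_comm' (t' := A.powersetCard k) (s' := fun s => A \ s) fun i s => by
    simp only [mem_powersetCard, subset_erase, mem_sdiff]
    tauto]
  refine sum_congr rfl fun s hs => ?_
  rw [mem_powersetCard] at hs
  rw [sum_const, card_sdiff_of_subset hs.1, hs.2, nsmul_eq_mul]

end Semiring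

section Ring

variable [CommRing R] [DecidableEq ι]

theorem sum_mul_esymmOn_erase (A : Finset ι) (k : ℕ) (w : ι → R) :
    ∑ i ∈ A, w i * esymmOn (A.erase i) k w = (k + 1) * esymmOn A (k + 1) w := by
  have h : ∀ i ∈ A, w i * esymmOn (A.erase i) k w
      = esymmOn A (k + 1) w - esymmOn (A.erase i) (k + 1) w := fun i hi => by
    rw [esymmOn_erase hi k w]; ring
  rw [sum_congr rfl h, sum_sub_distrib, sum_const, sum_esymmOn_erase, nsmul_eq_mul]
  rcases le_or_gt (k + 1) A.card with hk | hk
  · rw [Nat.cast_sub hk]; push_cast; ring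
  · rw [esymmOn_eq_zero_of_card_lt hk]; ring

theorem esymmOn_succ_succ_eq (A : Finset ι) (k : ℕ) (w : ι → R) :
    (k + 2) * esymmOn A (k + 2) w
      = esymmOn A 1 w * esymmOn A (k + 1) w - ∑ i ∈ A, w i ^ 2 * esymmOn (A.erase i) k w := by
  have h : ∀ i ∈ A, w i * esymmOn (A.erase i) (k + 1) w
      = w i * esymmOn A (k + 1) w - w i ^ 2 * esymmOn (A.erase i) k w := fun i hi => by
    rw [esymmOn_erase hi k w]; ring
  rw [show (k + 2 : R) = ((k + 1 : ℕ) : R) + 1 by push_cast; ring, ← sum_mul_esymmOn_erase,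
    sum_congr rfl h, sum_sub_distrib, ← sum_mul, esymmOn_one]

theorem esymmOn_newton_gap (A : Finset ι) (j : ℕ) (w : ι → R) :
    (j + 2) * esymmOn A (j + 2) w ^ 2 - (j + 3) * (esymmOn A (j + 3) w * esymmOn A (j + 1) w)
      = ∑ i ∈ A, w i ^ 2 * (esymmOn (A.erase i) (j + 1) w ^ 2
          - esymmOn (A.erase i) (j + 2) w * esymmOn (A.erase i) j w) := by
  have h₁ := esymmOn_succ_succ_eq A (j + 1) w
  have h₂ := esymmOn_succ_succ_eq A j w
  push_cast at h₁
  calc _ = (∑ i ∈ A, w i ^ 2 * esymmOn (A.erase i) (j + 1) w) * esymmOn A (j + 1) w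
        - (∑ i ∈ A, w i ^ 2 * esymmOn (A.erase i) j w) * esymmOn A (j + 2) w := by
        linear_combination esymmOn A (j + 2) w * h₂ - esymmOn A (j + 1) w * h₁
    _ = _ := by
      rw [sum_mul, sum_mul, ← sum_sub_distrib]
      refine sum_congr rfl fun i hi => ?_
      linear_combination (w i ^ 2 * esymmOn (A.erase i) (j + 1) w) * esymmOn_erase hi j w
        - (w i ^ 2 * esymmOn (A.erase i) j w) * esymmOn_erase hi (j + 1) w

end Ring

section Newton

variable [CommRing R] [LinearOrder R] [IsStrictOrderedRing R] [DecidableEq ι]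

theorem esymmOn_newton (j : ℕ) (A : Finset ι) (w : ι → R) :
    (j + 2) * (esymmOn A (j + 2) w * esymmOn A j w) ≤ (j + 1) * esymmOn A (j + 1) w ^ 2 := by
  induction j generalizing A with
  | zero =>
    have h := esymmOn_succ_succ_eq A 0 w
    simp only [Nat.cast_zero, zero_add, esymmOn_zero, mul_one, esymmOn_one] at h ⊢
    nlinarith [sum_nonneg fun i (_ : i ∈ A) => sq_nonneg (w i)]
  | succ j ih =>
    have gap := esymmOn_newton_gap A j w
    have hB : ∀ i ∈ A, 0 ≤ w i ^ 2 * (esymmOn (A.erase i) (j + 1) w ^ 2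
        - esymmOn (A.erase i) (j + 2) w * esymmOn (A.erase i) j w) := fun i _ =>
      mul_nonneg (sq_nonneg _)
        (sub_nonneg.2 (le_of_natCast_add_two_mul_le j (sq_nonneg _) (ih _)))
    push_cast
    linarith [sum_nonneg hB]

theorem esymmOn_mul_le_sq (j : ℕ) (A : Finset ι) (w : ι → R) :
    esymmOn A (j + 2) w * esymmOn A j w ≤ esymmOn A (j + 1) w ^ 2 :=
  le_of_natCast_add_two_mul_le j (sq_nonneg _) (esymmOn_newton j A w)

end Newton

def gardingSet [CommSemiring R] [PartialOrder R] (A : Finset ι) (m : ℕ) : Set (ι → R) :=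
  {w | ∀ j, 1 ≤ j → j ≤ m → 0 < esymmOn A j w}

section GardingSet

variable [CommSemiring R] [PartialOrder R] {A : Finset ι} {m : ℕ} {w : ι → R}

theorem gardingSet_anti {m' : ℕ} (h : m' ≤ m) :
    gardingSet A m ⊆ (gardingSet A m' : Set (ι → R)) :=
  fun _ hw j h₁ h₂ => hw j h₁ (h₂.trans h)

theorem card_le_of_mem_gardingSet (hw : w ∈ gardingSet A m) : m ≤ A.card := by
  by_contra! h
  have := hw (A.card + 1) (by omega) h
  rw [esymmOn_eq_zero_of_card_lt (by omega)] at this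
  exact this.false

end GardingSet

section OrderedRing

variable [CommRing R] [LinearOrder R] [IsStrictOrderedRing R]
  {A : Finset ι} {m : ℕ} {w : ι → R}

theorem esymmOn_pos_of_mem_gardingSet (hw : w ∈ gardingSet A m) {j : ℕ} (hj : j ≤ m) :
    0 < esymmOn A j w := by
  rcases j with _ | j
  · simp
  · exact hw _ j.succ_pos hj

theorem smul_mem_gardingSet {c : R} (hc : 0 < c) (hw : w ∈ gardingSet A m) :
    c • w ∈ gardingSet A m := fun j h₁ h₂ => by
  rw [esymmOn_smul]
  exact mul_pos (pow_pos hc j) (hw j h₁ h₂)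

theorem esymmOn_pos_of_forall_pos (hw : ∀ i ∈ A, 0 < w i) {k : ℕ} (hk : k ≤ A.card) :
    0 < esymmOn A k w :=
  sum_pos (fun _ hs => prod_pos fun i hi => hw i ((mem_powersetCard.1 hs).1 hi))
    (powersetCard_nonempty.2 hk)

variable [DecidableEq ι]

theorem mem_gardingSet_erase_of_nonpos (hw : w ∈ gardingSet A m) {i : ι} (hi : i ∈ A)
    (hwi : w i ≤ 0) : w ∈ gardingSet (A.erase i) m := by
  suffices ∀ j ≤ m, 0 < esymmOn (A.erase i) j w from fun j _ hj => this j hj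
  intro j hj
  induction j with
  | zero => simp
  | succ j ih =>
    have := esymmOn_erase hi j w
    nlinarith [hw (j + 1) (by omega) hj, ih (by omega)]

theorem esymmOn_erase_succ_pos {i i₁ : ι} (hi : i ∈ A) (hi₁ : i₁ ∈ A) (hne : i ≠ i₁) (j : ℕ)
    (hA : 0 < esymmOn A (j + 2) w) (h₁ : 0 < esymmOn (A.erase i₁) (j + 1) w)
    (hB : 0 < esymmOn ((A.erase i₁).erase i) j w) :
    0 < esymmOn (A.erase i) (j + 1) w := by
  set B := (A.erase i₁).erase i
  have hiB : i ∈ A.erase i₁ := mem_erase.2 ⟨hne, hi⟩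
  have eA := esymmOn_erase hi₁ (j + 1) w
  have e₁ : esymmOn (A.erase i) (j + 1) w = esymmOn B (j + 1) w + w i₁ * esymmOn B j w := by
    rw [show B = (A.erase i).erase i₁ from erase_right_comm]
    exact esymmOn_erase (mem_erase.2 ⟨hne.symm, hi₁⟩) j w
  have e₂ := esymmOn_erase hiB (j + 1) w
  have e₃ := esymmOn_erase hiB j w
  have hnewton : esymmOn (A.erase i₁) (j + 2) w * esymmOn B j w
      ≤ esymmOn (A.erase i₁) (j + 1) w * esymmOn B (j + 1) w := by
    rw [e₂, e₃]
    nlinarith [esymmOn_mul_le_sq j B w]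
  -- `σ_{j+1}(A∖i₁) · σ_{j+1}(A∖i) ≥ σ_j(B) · σ_{j+2}(A) > 0`, by `hnewton`
  rw [e₁]
  refine pos_of_mul_pos_right (a := esymmOn (A.erase i₁) (j + 1) w) ?_ h₁.le
  nlinarith [mul_pos (eA ▸ hA) hB]

theorem erase_mem_gardingSet (hw : w ∈ gardingSet A (m + 1)) {i : ι} (hi : i ∈ A) :
    w ∈ gardingSet (A.erase i) m := by
  induction A using Finset.strongInduction generalizing i with
  | H A ih =>
  by_cases! hpos : ∃ i₁ ∈ A, w i₁ ≤ 0
  swap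
  · refine fun j _ hj => esymmOn_pos_of_forall_pos (fun p hp => hpos p (mem_of_mem_erase hp)) ?_
    have := card_le_of_mem_gardingSet hw
    rw [card_erase_of_mem hi]
    omega
  obtain ⟨i₁, hi₁, hwi₁⟩ := hpos
  have h₁ := mem_gardingSet_erase_of_nonpos hw hi₁ hwi₁
  rcases eq_or_ne i i₁ with rfl | hne
  · exact gardingSet_anti m.le_succ h₁
  have hB := ih _ (erase_ssubset hi₁) h₁ (mem_erase.2 ⟨hne, hi⟩)
  rintro (_ | j) _ hj
  · omega
  exact esymmOn_erase_succ_pos hi hi₁ hne j (hw _ (by omega) (by omega))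
    (h₁ _ (by omega) (by omega)) (esymmOn_pos_of_mem_gardingSet hB (by omega))

end OrderedRing

section Field

variable [Field R] [DecidableEq ι] {A : Finset ι}

theorem esymmOn_succ_succ_div_eq (r : ℕ) {u : ι → R} (hu : esymmOn A (r + 1) u ≠ 0) :
    (r + 2) * (esymmOn A (r + 2) u / esymmOn A (r + 1) u)
      = esymmOn A 1 u - ∑ i ∈ A, u i ^ 2 / (esymmOn A (r + 1) u / esymmOn (A.erase i) r u) := by
  simp_rw [div_div_eq_mul_div, ← sum_div]
  field_simp
  linear_combination esymmOn_succ_succ_eq A r u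

theorem esymmOn_div_esymmOn_erase {i : ι} (hi : i ∈ A) (r : ℕ) {u : ι → R}
    (hu : esymmOn (A.erase i) r u ≠ 0) :
    esymmOn A (r + 1) u / esymmOn (A.erase i) r u
      = u i + esymmOn (A.erase i) (r + 1) u / esymmOn (A.erase i) r u := by
  rw [esymmOn_erase hi r u]
  field_simp
  ring

end Field

section OrderedField

variable [Field R] [LinearOrder R] [IsStrictOrderedRing R] {A : Finset ι} {r : ℕ} {x y : ι → R}

theorem add_mem_gardingSet_succ
    (hΓ : ∀ x ∈ (gardingSet A r : Set (ι → R)), ∀ y ∈ gardingSet A r, x + y ∈ gardingSet A r)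
    (hQ : SuperadditiveOn (gardingSet A (r + 1))
      fun w : ι → R => esymmOn A (r + 1) w / esymmOn A r w)
    (hx : x ∈ gardingSet A (r + 1)) (hy : y ∈ gardingSet A (r + 1)) :
    x + y ∈ gardingSet A (r + 1) := by
  have hxy := hΓ x (gardingSet_anti r.le_succ hx) y (gardingSet_anti r.le_succ hy)
  intro j h₁ hj
  rcases hj.lt_or_eq with hj | rfl
  · exact hxy j h₁ (by omega)
  have hqx := div_pos (hx _ h₁ le_rfl) (esymmOn_pos_of_mem_gardingSet hx r.le_succ)
  have hqy := div_pos (hy _ h₁ le_rfl) (esymmOn_pos_of_mem_gardingSet hy r.le_succ)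
  have hq := hQ x hx y hy
  exact (div_pos_iff_of_pos_right (esymmOn_pos_of_mem_gardingSet hxy le_rfl)).1 (by
    dsimp only at hq; linarith)

variable [DecidableEq ι]

theorem sq_div_esymmOn_div_erase_add_le {i : ι} (hi : i ∈ A)
    (hQ : SuperadditiveOn (gardingSet (A.erase i) (r + 1))
      fun w : ι → R => esymmOn (A.erase i) (r + 1) w / esymmOn (A.erase i) r w)
    (hx : x ∈ gardingSet A (r + 2)) (hy : y ∈ gardingSet A (r + 2))
    (hxy : x + y ∈ gardingSet A (r + 1)) :
    (x + y) i ^ 2 / (esymmOn A (r + 1) (x + y) / esymmOn (A.erase i) r (x + y))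
      ≤ x i ^ 2 / (esymmOn A (r + 1) x / esymmOn (A.erase i) r x)
        + y i ^ 2 / (esymmOn A (r + 1) y / esymmOn (A.erase i) r y) := by
  have hx' := erase_mem_gardingSet hx hi
  have hy' := erase_mem_gardingSet hy hi
  have hxy' := erase_mem_gardingSet hxy hi
  have hdx := esymmOn_pos_of_mem_gardingSet hx' r.le_succ
  have hdy := esymmOn_pos_of_mem_gardingSet hy' r.le_succ
  have hdxy := esymmOn_pos_of_mem_gardingSet hxy' le_rfl
  refine add_sq_div_le_of_add_le
    (div_pos (esymmOn_pos_of_mem_gardingSet hx (by omega)) hdx)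
    (div_pos (esymmOn_pos_of_mem_gardingSet hy (by omega)) hdy) ?_
  rw [esymmOn_div_esymmOn_erase hi r hdx.ne', esymmOn_div_esymmOn_erase hi r hdy.ne',
    esymmOn_div_esymmOn_erase hi r hdxy.ne', Pi.add_apply]
  linarith [hQ x hx' y hy']

theorem superadditiveOn_esymmOn_div_succ
    (hQ : ∀ i ∈ A, SuperadditiveOn (gardingSet (A.erase i) (r + 1))
      fun w : ι → R => esymmOn (A.erase i) (r + 1) w / esymmOn (A.erase i) r w)
    (hΓ : ∀ x ∈ (gardingSet A (r + 1) : Set (ι → R)), ∀ y ∈ gardingSet A (r + 1),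
      x + y ∈ gardingSet A (r + 1)) :
    SuperadditiveOn (gardingSet A (r + 2))
      fun w : ι → R => esymmOn A (r + 2) w / esymmOn A (r + 1) w := by
  intro x hx y hy
  have hxy := hΓ x (gardingSet_anti r.succ.le_succ hx) y (gardingSet_anti r.succ.le_succ hy)
  have hterms := sum_le_sum fun i hi =>
    sq_div_esymmOn_div_erase_add_le hi (hQ i hi) hx hy hxy
  rw [sum_add_distrib] at hterms
  have hsum : (r + 2 : R) * (esymmOn A (r + 2) x / esymmOn A (r + 1) x
      + esymmOn A (r + 2) y / esymmOn A (r + 1) y)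
      ≤ (r + 2) * (esymmOn A (r + 2) (x + y) / esymmOn A (r + 1) (x + y)) := by
    rw [mul_add, esymmOn_succ_succ_div_eq r (esymmOn_pos_of_mem_gardingSet hx (by omega)).ne',
      esymmOn_succ_succ_div_eq r (esymmOn_pos_of_mem_gardingSet hy (by omega)).ne',
      esymmOn_succ_succ_div_eq r (esymmOn_pos_of_mem_gardingSet hxy le_rfl).ne',
      esymmOn_one, esymmOn_one, esymmOn_one]
    simp only [Pi.add_apply, sum_add_distrib] at hterms ⊢
    linarith
  exact le_of_mul_le_mul_left hsum (by positivity)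

theorem gardingSet_add_mem_and_superadditiveOn (r : ℕ) (A : Finset ι) :
    (∀ x ∈ (gardingSet A r : Set (ι → R)), ∀ y ∈ gardingSet A r, x + y ∈ gardingSet A r) ∧
      SuperadditiveOn (gardingSet A (r + 1))
        fun w : ι → R => esymmOn A (r + 1) w / esymmOn A r w := by
  induction r generalizing A with
  | zero =>
    refine ⟨fun x _ y _ j h₁ h₂ => by omega, fun x _ y _ => le_of_eq ?_⟩
    simp [esymmOn_one, sum_add_distrib]
  | succ r ih =>
    have hΓ : ∀ x ∈ (gardingSet A (r + 1) : Set (ι → R)), ∀ y ∈ gardingSet A (r + 1),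
        x + y ∈ gardingSet A (r + 1) := fun x hx y hy =>
      add_mem_gardingSet_succ (ih A).1 (ih A).2 hx hy
    exact ⟨hΓ, superadditiveOn_esymmOn_div_succ (fun i _ => (ih _).2) hΓ⟩

theorem add_mem_gardingSet {m : ℕ} (hx : x ∈ gardingSet A m) (hy : y ∈ gardingSet A m) :
    x + y ∈ gardingSet A m :=
  (gardingSet_add_mem_and_superadditiveOn m A).1 x hx y hy

theorem superadditiveOn_esymmOn_div (r : ℕ) (A : Finset ι) :
    SuperadditiveOn (gardingSet A (r + 1))
      fun w : ι → R => esymmOn A (r + 1) w / esymmOn A r w :=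
  (gardingSet_add_mem_and_superadditiveOn r A).2

def gardingCone (A : Finset ι) (m : ℕ) : ConvexCone R (ι → R) where
  carrier := gardingSet A m
  smul_mem' _ hc _ hw := smul_mem_gardingSet hc hw
  add_mem' _ hx _ hy := add_mem_gardingSet hx hy

end OrderedField

section Quotient

variable {A : Finset ι} {k l : ℕ} {w : ι → ℝ}

theorem esymmOn_div_eq_prod (hlk : l ≤ k) (hw : w ∈ gardingSet A k) :
    esymmOn A k w / esymmOn A l w = ∏ j ∈ Ico l k, esymmOn A (j + 1) w / esymmOn A j w :=
  (prod_Ico_div₀ hlk fun _ hj => (esymmOn_pos_of_mem_gardingSet hw (mem_Icc.1 hj).2).ne').symm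

theorem esymmOn_div_rpow_smul (hlk : l < k) {c : ℝ} (hc : 0 < c) (hw : w ∈ gardingSet A k) :
    (esymmOn A k (c • w) / esymmOn A l (c • w)) ^ ((1 : ℝ) / ((k : ℝ) - (l : ℝ)))
      = c * (esymmOn A k w / esymmOn A l w) ^ ((1 : ℝ) / ((k : ℝ) - (l : ℝ))) := by
  have hq : 0 ≤ esymmOn A k w / esymmOn A l w :=
    (div_pos (esymmOn_pos_of_mem_gardingSet hw le_rfl)
      (esymmOn_pos_of_mem_gardingSet hw hlk.le)).le
  rw [esymmOn_smul, esymmOn_smul, mul_div_mul_comm, div_eq_mul_inv (c ^ k),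
    ← pow_sub₀ c hc.ne' hlk.le,
    Real.mul_rpow (by positivity) hq, ← Nat.cast_sub hlk.le, one_div,
    Real.pow_rpow_inv_natCast hc.le (by omega)]

variable [DecidableEq ι]

theorem superadditiveOn_esymmOn_div_rpow (hlk : l < k) :
    SuperadditiveOn (gardingSet A k)
      fun w : ι → ℝ => (esymmOn A k w / esymmOn A l w) ^ ((1 : ℝ) / ((k : ℝ) - (l : ℝ))) := by
  intro x hx y hy
  have hxy := add_mem_gardingSet hx hy
  have hQ : ∀ u ∈ (gardingSet A k : Set (ι → ℝ)), ∀ j ∈ Ico l k,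
      0 < esymmOn A (j + 1) u / esymmOn A j u :=
    fun u hu j hj => div_pos (esymmOn_pos_of_mem_gardingSet hu (mem_Ico.1 hj).2)
      (esymmOn_pos_of_mem_gardingSet hu (mem_Ico.1 hj).2.le)
  have hexp : (k : ℝ) - l = #(Ico l k) := by rw [Nat.card_Ico, Nat.cast_sub hlk.le]
  dsimp only
  rw [esymmOn_div_eq_prod hlk.le hx, esymmOn_div_eq_prod hlk.le hy,
    esymmOn_div_eq_prod hlk.le hxy, hexp]
  have hsum : ∀ j ∈ Ico l k,
      0 ≤ esymmOn A (j + 1) x / esymmOn A j x + esymmOn A (j + 1) y / esymmOn A j y :=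
    fun j hj => (add_pos (hQ x hx j hj) (hQ y hy j hj)).le
  refine (Real.geom_mean_add_le (nonempty_Ico.2 hlk) (hQ x hx) (hQ y hy)).trans
    (Real.rpow_le_rpow (prod_nonneg hsum) (prod_le_prod hsum fun j hj => ?_) (by positivity))
  have hj : j + 1 ≤ k := (mem_Ico.1 hj).2
  exact superadditiveOn_esymmOn_div j A x (gardingSet_anti hj hx) y (gardingSet_anti hj hy)

end Quotient

theorem quotient_power_concave_general (n k l : ℕ) (hlk : l < k) :
    ConcaveOn ℝ {κ : Fin n → ℝ | ∀ j : ℕ, 1 ≤ j → j ≤ k → 0 < esymm n j κ}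
      (fun κ => (esymm n k κ / esymm n l κ) ^ ((1 : ℝ) / ((k : ℝ) - (l : ℝ)))) :=
  -- `esymm n j` is `esymmOn univ j` by definition, so the domain is `gardingCone univ k`
  (gardingCone univ k).concaveOn_of_superadditiveOn (superadditiveOn_esymmOn_div_rpow hlk)
    fun _ hc _ hw => esymmOn_div_rpow_smul hlk hc hw

/-- Concavity of (σ_k/σ_l)^{1/(k-l)} on the Gårding cone Γ_k. -/
theorem quotient_power_concave (n k l : ℕ) (hlk : l < k) (hkn : k ≤ n) :
    ConcaveOn ℝ {κ : Fin n → ℝ | ∀ j : ℕ, 1 ≤ j → j ≤ k → 0 < esymm n j κ}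
      (fun κ => (esymm n k κ / esymm n l κ) ^ ((1 : ℝ) / ((k : ℝ) - (l : ℝ)))) :=
  quotient_power_concave_general n k l hlk
end

section
/- Maclaurin's inequality: for nonnegative reals κ_1, ..., κ_n and 1 ≤ l ≤ k ≤ n, (σ_k(κ)/C(n,k))^{1/k} ≤ (σ_l(κ)/C(n,l))^{1/l}. -/
open Finset

/-! For reals `a₁, …, aₘ` write `E_r = σ_r / C(m, r)`. Newton's inequalities
`E_k E_{k+2} ≤ E_{k+1}²` hold for all real `aᵢ`, by induction on `m`: by Rolle the derivative of
`∏ (X - aᵢ)` is `m ∏ (X - bⱼ)` for `m - 1` reals `bⱼ`, and comparing coefficients shows that the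
`bⱼ` have the same means `E_r` for `r < m`. In the top case `m = k + 2` the inequality is
Cauchy–Schwarz for the products `Aᵢ = ∏_{j ≠ i} aⱼ`, as `σ_{m-1} = ∑ Aᵢ` and
`2 σ_{m-2} σ_m = ∑_{i ≠ j} Aᵢ Aⱼ`.

For nonnegative `aᵢ` the sequence `E_0 = 1, E_1, …, E_n` is then nonnegative, log-concave and
has no internal zeros, and for such a sequence `E_j ^ (1/j)` decreases: inductively
`E_{j+1}^j ≤ E_j^{j+1}`. -/

open Polynomial

theorem Finset.sum_sum_powersetCard_erase {ι M : Type*} [DecidableEq ι] [AddCommMonoid M]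
    (u : Finset ι) (r : ℕ) (f : Finset ι → M) :
    ∑ p ∈ u, ∑ t ∈ (u.erase p).powersetCard r, f t = (#u - r) • ∑ t ∈ u.powersetCard r, f t := by
  calc ∑ p ∈ u, ∑ t ∈ (u.erase p).powersetCard r, f t
      = ∑ t ∈ u.powersetCard r, ∑ _p ∈ u \ t, f t := by
        refine Finset.sum_comm' fun p t => ?_
        simp only [mem_powersetCard, subset_erase, mem_sdiff]
        tauto
    _ = (#u - r) • ∑ t ∈ u.powersetCard r, f t := by
        rw [smul_sum]
        refine sum_congr rfl fun t ht => ?_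
        rw [mem_powersetCard] at ht
        rw [sum_const, card_sdiff_of_subset ht.1, ht.2]

theorem Finset.sum_powersetCard_card {ι M : Type*} [AddCommMonoid M] (u : Finset ι) {r : ℕ}
    (hu : #u = r) (f : Finset ι → M) : ∑ t ∈ u.powersetCard r, f t = f u := by
  rw [← hu, powersetCard_self, sum_singleton]

section ProdErase

variable {ι : Type*} [Fintype ι] [DecidableEq ι] (κ : ι → ℝ) {k : ℕ}

theorem sum_powersetCard_eq_sum_prod_erase (hι : Fintype.card ι = k + 2) :
    ∑ t ∈ univ.powersetCard (k + 1), ∏ i ∈ t, κ i = ∑ i, ∏ j ∈ univ.erase i, κ j := by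
  have h := sum_sum_powersetCard_erase univ (k + 1) fun t => ∏ i ∈ t, κ i
  rw [card_univ, hι, show k + 2 - (k + 1) = 1 by omega, one_smul] at h
  rw [← h]
  refine sum_congr rfl fun i _ => sum_powersetCard_card _ ?_ _
  rw [card_erase_of_mem (mem_univ i), card_univ, hι]
  rfl

theorem prod_erase_mul_prod_erase {i j : ι} (hij : j ≠ i) :
    (∏ l ∈ univ.erase i, κ l) * ∏ l ∈ univ.erase j, κ l
      = (∏ l, κ l) * ∏ l ∈ (univ.erase i).erase j, κ l := by
  have hi := mul_prod_erase univ κ (mem_univ i)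
  have hj := mul_prod_erase (univ.erase i) κ (mem_erase.2 ⟨hij, mem_univ j⟩)
  have hj' := mul_prod_erase (univ.erase j) κ (mem_erase.2 ⟨hij.symm, mem_univ i⟩)
  rw [erase_right_comm] at hj'
  rw [← hi, ← hj, ← hj']
  ring

theorem sum_sum_prod_erase_mul_prod_erase (hι : Fintype.card ι = k + 2) :
    ∑ i, ∑ j ∈ univ.erase i, (∏ l ∈ univ.erase i, κ l) * ∏ l ∈ univ.erase j, κ l
      = 2 * ((∑ t ∈ univ.powersetCard k, ∏ i ∈ t, κ i) * ∏ i, κ i) := by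
  have hinner : ∀ i, ∑ j ∈ univ.erase i, ∑ t ∈ ((univ.erase i).erase j).powersetCard k,
      ∏ l ∈ t, κ l = ∑ t ∈ (univ.erase i).powersetCard k, ∏ l ∈ t, κ l := by
    intro i
    rw [sum_sum_powersetCard_erase, card_erase_of_mem (mem_univ i), card_univ, hι,
      show k + 2 - 1 - k = 1 by omega, one_smul]
  have houter := sum_sum_powersetCard_erase univ k fun t => ∏ i ∈ t, κ i
  rw [card_univ, hι, show k + 2 - k = 2 by omega, two_smul] at houter
  calc ∑ i, ∑ j ∈ univ.erase i, (∏ l ∈ univ.erase i, κ l) * ∏ l ∈ univ.erase j, κ l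
      = ∑ i, ∑ j ∈ univ.erase i, (∏ l, κ l) *
          ∑ t ∈ ((univ.erase i).erase j).powersetCard k, ∏ l ∈ t, κ l := by
        refine sum_congr rfl fun i _ => sum_congr rfl fun j hj => ?_
        rw [prod_erase_mul_prod_erase κ (ne_of_mem_erase hj), sum_powersetCard_card]
        rw [card_erase_of_mem hj, card_erase_of_mem (mem_univ i), card_univ, hι]
        rfl
    _ = 2 * ((∑ t ∈ univ.powersetCard k, ∏ i ∈ t, κ i) * ∏ i, κ i) := by
        simp only [← mul_sum, hinner, houter]
        ring

theorem two_mul_card_mul_sum_powersetCard_mul_le (hι : Fintype.card ι = k + 2) :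
    2 * (k + 2) * ((∑ t ∈ univ.powersetCard k, ∏ i ∈ t, κ i)
        * ∑ t ∈ univ.powersetCard (k + 2), ∏ i ∈ t, κ i)
      ≤ (k + 1) * (∑ t ∈ univ.powersetCard (k + 1), ∏ i ∈ t, κ i) ^ 2 := by
  rw [sum_powersetCard_card univ (card_univ.trans hι)]
  have hcs := sq_sum_le_card_mul_sum_sq (s := univ) (f := fun i => ∏ j ∈ univ.erase i, κ j)
  rw [card_univ, hι, Nat.cast_add, Nat.cast_two] at hcs
  have hsplit : (∑ i, ∏ j ∈ univ.erase i, κ j) ^ 2 = ∑ i, (∏ j ∈ univ.erase i, κ j) ^ 2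
      + ∑ i, ∑ j ∈ univ.erase i, (∏ l ∈ univ.erase i, κ l) * ∏ l ∈ univ.erase j, κ l := by
    rw [sq, sum_mul_sum, ← sum_add_distrib]
    refine sum_congr rfl fun i _ => ?_
    rw [← add_sum_erase _ _ (mem_univ i), sq]
  rw [sum_powersetCard_eq_sum_prod_erase κ hι]
  linear_combination hcs - (k + 2) * hsplit - (k + 2) * sum_sum_prod_erase_mul_prod_erase κ hι

end ProdErase

theorem Multiset.exists_derivative_prod_X_sub_C_eq (s : Multiset ℝ) {m : ℕ}
    (hs : Multiset.card s = m + 1) :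
    ∃ t : Multiset ℝ, Multiset.card t = m ∧
      derivative (s.map fun a => X - C a).prod
        = C ((m : ℝ) + 1) * (t.map fun a => X - C a).prod := by
  set f := (s.map fun a => X - C a).prod
  have hrolle : m + 1 ≤ Multiset.card (derivative f).roots + 1 := by
    simpa only [f, roots_multiset_prod_X_sub_C, hs] using card_roots_le_derivative f
  have hdeg : (derivative f).natDegree ≤ m :=
    (natDegree_derivative_le f).trans (by rw [natDegree_multiset_prod_X_sub_C_eq_card, hs]; simp)
  have hcard : Multiset.card (derivative f).roots = (derivative f).natDegree :=
    le_antisymm (card_roots' _) (by omega)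
  have hlead : (derivative f).leadingCoeff = (m : ℝ) + 1 := by
    rw [leadingCoeff, show (derivative f).natDegree = m by omega, coeff_derivative,
      prod_X_sub_C_coeff s (by omega)]
    simp [hs, Multiset.esymm, Multiset.powersetCard_zero_left]
  refine ⟨(derivative f).roots, by omega, ?_⟩
  rw [← hlead, C_leadingCoeff_mul_prod_multiset_X_sub_C hcard]

theorem Multiset.exists_card_eq_esymm_div_choose_eq (s : Multiset ℝ) {m : ℕ}
    (hs : Multiset.card s = m + 1) :
    ∃ t : Multiset ℝ, Multiset.card t = m ∧
      ∀ r ≤ m, t.esymm r / m.choose r = s.esymm r / (m + 1).choose r := by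
  obtain ⟨t, ht, hderiv⟩ := s.exists_derivative_prod_X_sub_C_eq hs
  refine ⟨t, ht, fun r hr => ?_⟩
  have hcoeff : s.esymm r * ((m - r : ℕ) + 1) = ((m : ℝ) + 1) * t.esymm r := by
    have h := congrArg (coeff · (m - r)) hderiv
    simp only [coeff_derivative, coeff_C_mul] at h
    rw [prod_X_sub_C_coeff s (by omega), prod_X_sub_C_coeff t (by omega), hs, ht,
      show m + 1 - (m - r + 1) = r by omega, show m - (m - r) = r by omega] at h
    exact mul_left_cancel₀ (pow_ne_zero r (neg_ne_zero.2 one_ne_zero)) (by linear_combination h)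
  have hchoose : (m.choose r : ℝ) * (m + 1) = (m + 1).choose r * ((m - r : ℕ) + 1) := by
    rw [show ((m - r : ℕ) : ℝ) + 1 = ((m + 1 - r : ℕ) : ℝ) by push_cast [Nat.sub_add_comm hr]; ring]
    exact_mod_cast Nat.choose_mul_succ_eq m r
  have hpos : (0 : ℝ) < m.choose r := by exact_mod_cast Nat.choose_pos hr
  have hpos' : (0 : ℝ) < (m + 1).choose r := by exact_mod_cast Nat.choose_pos (by omega)
  rw [div_eq_div_iff hpos.ne' hpos'.ne']
  refine mul_left_cancel₀ (show (m : ℝ) + 1 ≠ 0 by positivity) ?_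
  linear_combination (-((m + 1).choose r : ℝ)) * hcoeff - s.esymm r * hchoose

theorem Multiset.two_mul_card_mul_esymm_mul_le (s : Multiset ℝ) {k : ℕ}
    (hs : Multiset.card s = k + 2) :
    2 * (k + 2) * (s.esymm k * s.esymm (k + 2)) ≤ (k + 1) * s.esymm (k + 1) ^ 2 := by
  classical
  rw [← s.map_univ_coe]
  simp only [Finset.esymm_map_val]
  exact two_mul_card_mul_sum_powersetCard_mul_le _ ((s.card_coe).trans hs)

theorem Multiset.esymm_div_choose_mul_le_sq (s : Multiset ℝ) {k : ℕ}
    (hk : k + 2 ≤ Multiset.card s) :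
    s.esymm k / (Multiset.card s).choose k
        * (s.esymm (k + 2) / (Multiset.card s).choose (k + 2))
      ≤ (s.esymm (k + 1) / (Multiset.card s).choose (k + 1)) ^ 2 := by
  obtain ⟨m, hm⟩ : ∃ m, Multiset.card s = m := ⟨_, rfl⟩
  rw [hm] at hk ⊢
  induction m, hk using Nat.le_induction generalizing s with
  | base =>
    have hchoose : ((k + 2).choose k : ℝ) = (k + 2) * (k + 1) / 2 := by
      rw [Nat.choose_symm_add, Nat.cast_choose_two]
      push_cast
      ring
    rw [hchoose, Nat.choose_succ_self_right, Nat.choose_self]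
    have := s.two_mul_card_mul_esymm_mul_le hm
    rw [div_pow, div_mul_div_comm, div_le_div_iff₀ (by positivity) (by positivity)]
    push_cast
    linear_combination ((k : ℝ) + 2) / 2 * this
  | succ m hkm ih =>
    obtain ⟨t, ht, heq⟩ := s.exists_card_eq_esymm_div_choose_eq hm
    rw [← heq k (by omega), ← heq (k + 1) (by omega), ← heq (k + 2) hkm]
    exact ih t ht

section LogConcave

variable {a : ℕ → ℝ} {n : ℕ}

theorem apply_succ_pow_le_pow_succ_of_logConcave (h0 : a 0 = 1) (hnn : ∀ j, 0 ≤ a j)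
    (hzero : ∀ j, j + 1 ≤ n → a j = 0 → a (j + 1) = 0)
    (hlc : ∀ j, j + 2 ≤ n → a j * a (j + 2) ≤ a (j + 1) ^ 2)
    {j : ℕ} (hj : 1 ≤ j) (hjn : j + 1 ≤ n) : a (j + 1) ^ j ≤ a j ^ (j + 1) := by
  induction j, hj using Nat.le_induction with
  | base => simpa [h0] using hlc 0 hjn
  | succ j hj ih =>
    rcases (hnn (j + 1)).eq_or_lt with hj0 | hpos
    · rw [← hj0, hzero (j + 1) hjn hj0.symm, zero_pow (by omega), zero_pow (by omega)]
    refine le_of_mul_le_mul_right ?_ (pow_pos hpos j)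
    calc a (j + 2) ^ (j + 1) * a (j + 1) ^ j ≤ a (j + 2) ^ (j + 1) * a j ^ (j + 1) :=
          mul_le_mul_of_nonneg_left (ih (by omega)) (pow_nonneg (hnn _) _)
      _ = (a j * a (j + 2)) ^ (j + 1) := by ring
      _ ≤ (a (j + 1) ^ 2) ^ (j + 1) :=
          pow_le_pow_left₀ (mul_nonneg (hnn _) (hnn _)) (hlc j hjn) _
      _ = a (j + 1) ^ (j + 2) * a (j + 1) ^ j := by ring

theorem rpow_one_div_succ_le_of_pow_le {x y : ℝ} (hx : 0 ≤ x) (hy : 0 ≤ y) {j : ℕ} (hj : 0 < j)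
    (h : x ^ j ≤ y ^ (j + 1)) :
    x ^ ((1 : ℝ) / (j + 1 : ℕ)) ≤ y ^ ((1 : ℝ) / j) := by
  have hj' : (0 : ℝ) < j := by exact_mod_cast hj
  calc x ^ ((1 : ℝ) / (j + 1 : ℕ)) = (x ^ j) ^ ((1 : ℝ) / (j * (j + 1))) := by
        rw [← Real.rpow_natCast, ← Real.rpow_mul hx]
        push_cast
        field_simp
    _ ≤ (y ^ (j + 1)) ^ ((1 : ℝ) / (j * (j + 1))) :=
        Real.rpow_le_rpow (pow_nonneg hx j) h (by positivity)
    _ = y ^ ((1 : ℝ) / j) := by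
        rw [← Real.rpow_natCast, ← Real.rpow_mul hy]
        push_cast
        field_simp

theorem rpow_one_div_le_of_logConcave (h0 : a 0 = 1) (hnn : ∀ j, 0 ≤ a j)
    (hzero : ∀ j, j + 1 ≤ n → a j = 0 → a (j + 1) = 0)
    (hlc : ∀ j, j + 2 ≤ n → a j * a (j + 2) ≤ a (j + 1) ^ 2)
    {l k : ℕ} (hl : 1 ≤ l) (hlk : l ≤ k) (hkn : k ≤ n) :
    a k ^ ((1 : ℝ) / k) ≤ a l ^ ((1 : ℝ) / l) := by
  induction k, hlk using Nat.le_induction with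
  | base => exact le_rfl
  | succ k hlk ih =>
    refine (rpow_one_div_succ_le_of_pow_le (hnn _) (hnn _) (by omega) ?_).trans (ih (by omega))
    exact apply_succ_pow_le_pow_succ_of_logConcave h0 hnn hzero hlc (by omega) hkn

end LogConcave

section FinEsymm

variable {n : ℕ} (κ : Fin n → ℝ)

theorem esymm_nonneg (h : ∀ i, 0 ≤ κ i) (k : ℕ) : 0 ≤ esymm n k κ :=
  sum_nonneg fun _ _ => prod_nonneg fun i _ => h i

theorem esymm_succ_eq_zero_of_eq_zero (h : ∀ i, 0 ≤ κ i) {k : ℕ} (hk : esymm n k κ = 0) :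
    esymm n (k + 1) κ = 0 := by
  have hprod : ∀ t ∈ univ.powersetCard k, ∏ i ∈ t, κ i = 0 :=
    (sum_eq_zero_iff_of_nonneg fun t _ => prod_nonneg fun i _ => h i).1 hk
  refine sum_eq_zero fun t ht => ?_
  rw [mem_powersetCard] at ht
  obtain ⟨u, hut, hu⟩ := exists_subset_card_eq (show k ≤ #t by omega)
  obtain ⟨i, hi, hκ⟩ := prod_eq_zero_iff.1 (hprod u (mem_powersetCard.2 ⟨hut.trans ht.1, hu⟩))
  exact prod_eq_zero (hut hi) hκ

theorem esymm_div_choose_mul_le_sq {k : ℕ} (hk : k + 2 ≤ n) :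
    esymm n k κ / n.choose k * (esymm n (k + 2) κ / n.choose (k + 2))
      ≤ (esymm n (k + 1) κ / n.choose (k + 1)) ^ 2 := by
  have h := (univ.val.map κ).esymm_div_choose_mul_le_sq (by simpa using hk)
  simpa only [esymm, Finset.esymm_map_val, Multiset.card_map, card_val, card_univ, Fintype.card_fin]
    using h

end FinEsymm

/-- Maclaurin's inequality. -/
theorem maclaurin_inequality (n k l : ℕ) (hl : 1 ≤ l) (hlk : l ≤ k) (hkn : k ≤ n)
    (κ : Fin n → ℝ) (h : ∀ i, 0 ≤ κ i) :
    (esymm n k κ / (n.choose k : ℝ)) ^ ((1 : ℝ) / k)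
      ≤ (esymm n l κ / (n.choose l : ℝ)) ^ ((1 : ℝ) / l) := by
  refine rpow_one_div_le_of_logConcave (a := fun j => esymm n j κ / n.choose j) (n := n)
    ?_ (fun j => div_nonneg (esymm_nonneg κ h j) (n.choose j).cast_nonneg) ?_
    (fun j hj => esymm_div_choose_mul_le_sq κ hj) hl hlk hkn
  · simp [esymm]
  · intro j hj hj0
    have hchoose : (n.choose j : ℝ) ≠ 0 := by exact_mod_cast (Nat.choose_pos (by omega)).ne'
    simp only [div_eq_zero_iff, hchoose, or_false] at hj0 ⊢
    exact Or.inl (esymm_succ_eq_zero_of_eq_zero κ h hj0)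
end
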